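/- In a quitting game, if all players are abnormal (that is, the set of normal players I_* is empty), then for every ε > 0 the game admits a stationary ε-equilibrium. -/

import Mathlib

noncomputable section

/-- The probability that, under the behavior strategy profile `x`, the game terminates at
stage `t` (0-indexed) with quitting set `S`. -/
def termProb {N : ℕ} (x : Fin N → ℕ → ℝ) (t : ℕ) (S : Finset (Fin N)) : ℝ :=
  (∏ u ∈ Finset.range t, ∏ i : Fin N, (1 - x i u)) *
    ((∏ i ∈ S, x i t) * ∏ i ∈ Sᶜ, (1 - x i t))

/-- The collection of nonempty subsets of players. -/
def nonempties (N : ℕ) : Finset (Finset (Fin N)) :=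
  Finset.univ.filter fun S => S ≠ ∅

/-- The expected payoff of player `i` under the behavior strategy profile `x` in the
quitting game with payoffs `r`. -/
def payoff {N : ℕ} (r : Finset (Fin N) → Fin N → ℝ) (x : Fin N → ℕ → ℝ) (i : Fin N) : ℝ :=
  (∑' t : ℕ, ∑ S ∈ nonempties N, termProb x t S * r S i) +
    (1 - ∑' t : ℕ, ∑ S ∈ nonempties N, termProb x t S) * r ∅ i

/-- `x` is an `ε`-equilibrium: it is a valid profile and no player can gain more than `ε`
by a unilateral deviation to any valid behavior strategy. -/
def IsEpsEquilibrium {N : ℕ} (r : Finset (Fin N) → Fin N → ℝ)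
    (x : Fin N → ℕ → ℝ) (ε : ℝ) : Prop :=
  (∀ i t, x i t ∈ Set.Icc (0 : ℝ) 1) ∧
    ∀ (i : Fin N) (x' : ℕ → ℝ), (∀ t, x' t ∈ Set.Icc (0 : ℝ) 1) →
      payoff r x i ≥ payoff r (Function.update x i x') i - ε

/-- The decreasing sequence of sets of players `I_0 ⊇ I_1 ⊇ ⋯`:
`I_0 = I` and `I_{l+1} = {i ∈ I_l : ∃ j ∈ I_l, j ≠ i, r^j_i ≤ 0}`. -/
def normalLevel {N : ℕ} (r : Finset (Fin N) → Fin N → ℝ) : ℕ → Set (Fin N)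
  | 0 => Set.univ
  | l + 1 => {i | i ∈ normalLevel r l ∧ ∃ j ∈ normalLevel r l, j ≠ i ∧ r {j} i ≤ 0}

/-- The set `I_* = ∩_l I_l` of normal players. -/
def normalPlayers {N : ℕ} (r : Finset (Fin N) → Fin N → ℝ) : Set (Fin N) :=
  ⋂ l, normalLevel r l

/-- A solution `(w,z)` of the linear complementarity problem `LCP((r^i)_{i=1}^n, q)`,
where `r i` is the vector `r^i`: `w ∈ ℝ^n_{≥0}`, `z ∈ Δ({0,1,…,n})`,
`w = z_0 q + ∑_i z_i r^i`, and `z_i = 0` or `w_i = 0` for every `i ∈ [n]`. -/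
def IsLCPSolution (n : ℕ) (r : Fin n → Fin n → ℝ) (q w : Fin n → ℝ)
    (z : Fin (n + 1) → ℝ) : Prop :=
  (∀ i, 0 ≤ w i) ∧ (∀ i, 0 ≤ z i) ∧ (∑ i, z i = 1) ∧
    (∀ j, w j = z 0 * q j + ∑ i : Fin n, z i.succ * r i j) ∧
    (∀ i : Fin n, z i.succ = 0 ∨ w i = 0)

/-- The matrix with columns `r^1,…,r^n` is a `Q`-matrix if `LCP((r^i), q)` has a solution
for every `q ∈ ℝ^n`. -/
def IsQMatrix (n : ℕ) (r : Fin n → Fin n → ℝ) : Prop :=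
  ∀ q : Fin n → ℝ, ∃ (w : Fin n → ℝ) (z : Fin (n + 1) → ℝ), IsLCPSolution n r q w z

/-!
Every payoff is the average of `r` against the law of the final quitting set. If `r^∅ ≥ 0`,
nobody ever quitting is an equilibrium. Otherwise let `I_M` be the last nonempty level of the
elimination. Each `j` drops out at some level `l ≤ M`, and the players of `I_M ⊆ I_l` are among
those it is tested against there, so `r^m_j > 0` for all `m ∈ I_M` and `j ≠ m`. If `M = 0` this
holds for every player, and a player with `r^∅ < 0` quits at a small constant rate `p`. If
`M ≥ 1`, some `m ∈ I_M` still has a punisher `k ≠ m` with `r^k_m ≤ 0`; then `m` quits at rate `p`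
and `k` at rate `p²`. Facing a player who quits at a constant rate, a deviator `i` ends up with
the quitting set `{i}` (worth `0`) or with that player's singleton, except on events of
probability `O(p)`: quitting together with that player (at most its rate) and `k` being among
the quitters (at most `p² / p`).
-/

namespace QuittingGame

open Finset Filter Topology

lemma sum_union_le_add {ι : Type*} [DecidableEq ι] {f : ι → ℝ} (hf : ∀ i, 0 ≤ f i)
    (s t : Finset ι) : ∑ i ∈ s ∪ t, f i ≤ ∑ i ∈ s, f i + ∑ i ∈ t, f i := by
  rw [← sum_union_inter]
  linarith [sum_nonneg fun i (_ : i ∈ s ∩ t) => hf i]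

lemma sum_mul_le_add_two_mul_sum {ι : Type*} [Fintype ι] [DecidableEq ι] {w f : ι → ℝ} {c : ℝ}
    (B : Finset ι) (hw : ∀ s, 0 ≤ w s) (hw1 : ∑ s, w s = 1) (hf : ∀ s, f s ≤ 1)
    (hc : -1 ≤ c) (hB : ∀ s ∉ B, f s ≤ c) :
    ∑ s, w s * f s ≤ c + 2 * ∑ s ∈ B, w s := by
  have hpt : ∀ s, w s * f s ≤ w s * c + 2 * (if s ∈ B then w s else 0) := by
    intro s
    split_ifs with hs
    · nlinarith [hw s, hf s]
    · nlinarith [hw s, hB s hs]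
  calc ∑ s, w s * f s ≤ ∑ s, (w s * c + 2 * (if s ∈ B then w s else 0)) :=
        sum_le_sum fun s _ => hpt s
    _ = c + 2 * ∑ s ∈ B, w s := by
      rw [sum_add_distrib, ← sum_mul, hw1, ← mul_sum, sum_ite_mem, univ_inter, one_mul]

section Bernoulli

variable {ι : Type*} [Fintype ι] [DecidableEq ι]

def bernoulliProd (z : ι → ℝ) (S : Finset ι) : ℝ :=
  (∏ i ∈ S, z i) * ∏ i ∈ Sᶜ, (1 - z i)

lemma bernoulliProd_nonneg {z : ι → ℝ} (hz : ∀ i, z i ∈ Set.Icc (0 : ℝ) 1) (S : Finset ι) :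
    0 ≤ bernoulliProd z S :=
  mul_nonneg (prod_nonneg fun i _ => (hz i).1) (prod_nonneg fun i _ => sub_nonneg.2 (hz i).2)

lemma bernoulliProd_empty (z : ι → ℝ) : bernoulliProd z ∅ = ∏ i, (1 - z i) := by
  simp [bernoulliProd]

lemma sum_bernoulliProd_superset (z : ι → ℝ) (A : Finset ι) :
    ∑ S with A ⊆ S, bernoulliProd z S = ∏ i ∈ A, z i := by
  have h := prod_add z (fun i => if i ∈ A then 0 else 1 - z i) univ
  have hterm : ∀ S : Finset ι, (∏ i ∈ S, z i) * ∏ i ∈ univ \ S, (if i ∈ A then 0 else 1 - z i)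
      = if A ⊆ S then bernoulliProd z S else 0 := by
    intro S
    split_ifs with hAS
    · rw [bernoulliProd, ← compl_eq_univ_sdiff]
      congr 1
      exact prod_congr rfl fun i hi => if_neg fun hiA => mem_compl.1 hi (hAS hiA)
    · obtain ⟨i, hiA, hiS⟩ := not_subset.1 hAS
      exact mul_eq_zero_of_right _ (prod_eq_zero (i := i) (by simpa using hiS) (if_pos hiA))
  simp only [powerset_univ, hterm, ← sum_filter] at h
  have hA : ∏ i, (if i ∈ A then z i else 1) = ∏ i ∈ A, z i := by
    rw [prod_ite_mem, univ_inter]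
  rw [← h, ← hA]
  exact prod_congr rfl fun i _ => by split_ifs <;> ring

lemma prod_one_sub_le {z : ι → ℝ} (hz : ∀ i, z i ∈ Set.Icc (0 : ℝ) 1) (a : ι) :
    ∏ i, (1 - z i) ≤ 1 - z a := by
  rw [← mul_prod_erase _ _ (mem_univ a)]
  exact mul_le_of_le_one_right (sub_nonneg.2 (hz a).2)
    (prod_le_one (fun i _ => sub_nonneg.2 (hz i).2) fun i _ => by linarith [(hz i).1])

end Bernoulli

variable {N : ℕ}

def IsProfile (y : Fin N → ℕ → ℝ) : Prop :=
  ∀ i t, y i t ∈ Set.Icc (0 : ℝ) 1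

def survivalProb (y : Fin N → ℕ → ℝ) (t : ℕ) : ℝ :=
  ∏ u ∈ range t, ∏ i, (1 - y i u)

lemma termProb_eq (y : Fin N → ℕ → ℝ) (t : ℕ) (S : Finset (Fin N)) :
    termProb y t S = survivalProb y t * bernoulliProd (fun i => y i t) S := rfl

lemma survivalProb_succ (y : Fin N → ℕ → ℝ) (t : ℕ) :
    survivalProb y (t + 1) = survivalProb y t * ∏ i, (1 - y i t) :=
  prod_range_succ _ t

lemma survivalProb_nonneg {y : Fin N → ℕ → ℝ} (hy : IsProfile y)
    (t : ℕ) : 0 ≤ survivalProb y t :=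
  prod_nonneg fun u _ => prod_nonneg fun i _ => sub_nonneg.2 (hy i u).2

lemma survivalProb_antitone {y : Fin N → ℕ → ℝ} (hy : IsProfile y) :
    Antitone (survivalProb y) := by
  refine antitone_nat_of_succ_le fun t => ?_
  rw [survivalProb_succ]
  exact mul_le_of_le_one_right (survivalProb_nonneg hy t)
    (prod_le_one (fun i _ => sub_nonneg.2 (hy i t).2) fun i _ => by linarith [(hy i t).1])

lemma survivalProb_le_pow {y : Fin N → ℕ → ℝ} (hy : IsProfile y)
    {a : Fin N} {p : ℝ} (hya : ∀ t, p ≤ y a t) (t : ℕ) : survivalProb y t ≤ (1 - p) ^ t := by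
  refine (prod_le_prod (fun u _ => prod_nonneg fun i _ => sub_nonneg.2 (hy i u).2)
    fun u _ => (prod_one_sub_le (fun i => hy i u) a).trans (sub_le_sub_left (hya u) 1)).trans_eq ?_
  rw [prod_const, card_range]

lemma nonempties_eq : nonempties N = {∅}ᶜ := by
  ext S
  simp [nonempties]

lemma termProb_nonneg {y : Fin N → ℕ → ℝ} (hy : IsProfile y)
    (t : ℕ) (S : Finset (Fin N)) : 0 ≤ termProb y t S :=
  mul_nonneg (survivalProb_nonneg hy t) (bernoulliProd_nonneg (fun i => hy i t) S)

lemma sum_termProb_nonempties (y : Fin N → ℕ → ℝ) (t : ℕ) :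
    ∑ S ∈ nonempties N, termProb y t S = survivalProb y t - survivalProb y (t + 1) := by
  have h := sum_bernoulliProd_superset (fun i => y i t) ∅
  simp only [empty_subset, filter_true, prod_empty] at h
  rw [Fintype.sum_eq_add_sum_compl ∅, bernoulliProd_empty] at h
  simp only [termProb_eq, ← mul_sum, nonempties_eq, survivalProb_succ]
  linear_combination (survivalProb y t) * h

lemma summable_termProb {y : Fin N → ℕ → ℝ} (hy : IsProfile y)
    {S : Finset (Fin N)} (hS : S ≠ ∅) : Summable (termProb y · S) := by
  have hdiff : Summable fun t => survivalProb y t - survivalProb y (t + 1) := by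
    refine summable_of_sum_range_le (c := 1)
      (fun t => sub_nonneg.2 (survivalProb_antitone hy t.le_succ)) fun T => ?_
    rw [sum_range_sub']
    linarith [survivalProb_nonneg hy T, show survivalProb y 0 = 1 from prod_range_zero _]
  refine hdiff.of_nonneg_of_le (termProb_nonneg hy · S) fun t => ?_
  rw [← sum_termProb_nonempties]
  exact single_le_sum (fun S _ => termProb_nonneg hy t S) (by simpa [nonempties] using hS)

/-- The law of the final quitting set; `∅` stands for the event that nobody ever quits. -/
def outcomeDist (y : Fin N → ℕ → ℝ) (S : Finset (Fin N)) : ℝ :=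
  if S = ∅ then 1 - ∑ S' ∈ nonempties N, ∑' t, termProb y t S' else ∑' t, termProb y t S

lemma outcomeDist_of_mem_nonempties (y : Fin N → ℕ → ℝ) {S : Finset (Fin N)}
    (hS : S ∈ nonempties N) : outcomeDist y S = ∑' t, termProb y t S :=
  if_neg (by simpa [nonempties] using hS)

lemma sum_outcomeDist (y : Fin N → ℕ → ℝ) : ∑ S, outcomeDist y S = 1 := by
  rw [Fintype.sum_eq_add_sum_compl ∅, ← nonempties_eq, outcomeDist, if_pos rfl,
    sum_congr rfl fun S hS => outcomeDist_of_mem_nonempties y hS]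
  ring

lemma payoff_eq_sum_outcomeDist (r : Finset (Fin N) → Fin N → ℝ) {y : Fin N → ℕ → ℝ}
    (hy : IsProfile y) (i : Fin N) :
    payoff r y i = ∑ S, outcomeDist y S * r S i := by
  have hsum : ∀ S ∈ nonempties N, Summable (termProb y · S) := fun S hS =>
    summable_termProb hy (by simpa [nonempties] using hS)
  rw [payoff, Summable.tsum_finsetSum fun S hS => (hsum S hS).mul_right _,
    Summable.tsum_finsetSum hsum, Fintype.sum_eq_add_sum_compl ∅, ← nonempties_eq,
    outcomeDist, if_pos rfl, add_comm]
  congr 1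
  exact sum_congr rfl fun S hS => by rw [outcomeDist_of_mem_nonempties y hS, tsum_mul_right]

lemma tendsto_survivalProb {y : Fin N → ℕ → ℝ} (hy : IsProfile y) :
    Tendsto (survivalProb y) atTop (𝓝 (outcomeDist y ∅)) := by
  set l := ⨅ t, survivalProb y t
  have hl : Tendsto (survivalProb y) atTop (𝓝 l) :=
    tendsto_atTop_ciInf (survivalProb_antitone hy) ⟨0, by
      rintro _ ⟨t, rfl⟩
      exact survivalProb_nonneg hy t⟩
  have hsum : HasSum (fun t => ∑ S ∈ nonempties N, termProb y t S) (1 - l) := by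
    simp only [sum_termProb_nonempties]
    refine (hasSum_iff_tendsto_nat_of_nonneg
      (fun t => sub_nonneg.2 (survivalProb_antitone hy t.le_succ)) _).2 ?_
    simp only [sum_range_sub', show survivalProb y 0 = 1 from prod_range_zero _]
    exact hl.const_sub 1
  have hl' : outcomeDist y ∅ = l := by
    rw [outcomeDist, if_pos rfl, ← Summable.tsum_finsetSum fun S hS =>
      summable_termProb hy (by simpa [nonempties] using hS), hsum.tsum_eq]
    ring
  rwa [hl']

lemma outcomeDist_nonneg {y : Fin N → ℕ → ℝ} (hy : IsProfile y)
    (S : Finset (Fin N)) : 0 ≤ outcomeDist y S := by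
  by_cases hS : S = ∅
  · subst hS
    exact ge_of_tendsto' (tendsto_survivalProb hy) (survivalProb_nonneg hy)
  · rw [outcomeDist, if_neg hS]
    exact tsum_nonneg (termProb_nonneg hy · S)

lemma outcomeDist_empty_eq_zero {y : Fin N → ℕ → ℝ} (hy : IsProfile y)
    {a : Fin N} {p : ℝ} (hp : 0 < p) (hya : ∀ t, p ≤ y a t) : outcomeDist y ∅ = 0 := by
  have hp1 : p ≤ 1 := (hya 0).trans (hy a 0).2
  refine tendsto_nhds_unique (tendsto_survivalProb hy) (squeeze_zero (survivalProb_nonneg hy)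
    (survivalProb_le_pow hy hya) (tendsto_pow_atTop_nhds_zero_of_lt_one ?_ ?_)) <;> linarith

lemma outcomeDist_eq_zero_of_idle {y : Fin N → ℕ → ℝ} {S : Finset (Fin N)} {j : Fin N}
    (hj : j ∈ S) (hidle : ∀ t, y j t = 0) : outcomeDist y S = 0 := by
  rw [outcomeDist, if_neg (ne_empty_of_mem hj)]
  refine (tsum_congr fun t => ?_).trans tsum_zero
  rw [termProb_eq, bernoulliProd, prod_eq_zero hj (hidle t), zero_mul, mul_zero]

lemma sum_outcomeDist_not_subset_eq_zero {y : Fin N → ℕ → ℝ} {A : Finset (Fin N)}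
    (hidle : ∀ j ∉ A, ∀ t, y j t = 0) : ∑ S with ¬S ⊆ A, outcomeDist y S = 0 := by
  refine sum_eq_zero fun S hS => ?_
  obtain ⟨j, hjS, hjA⟩ := not_subset.1 (mem_filter.1 hS).2
  exact outcomeDist_eq_zero_of_idle hjS (hidle j hjA)

def quitProb (y : Fin N → ℕ → ℝ) (A : Finset (Fin N)) : ℝ :=
  ∑ S with A ⊆ S, outcomeDist y S

lemma quitProb_le_one {y : Fin N → ℕ → ℝ} (hy : IsProfile y)
    (A : Finset (Fin N)) : quitProb y A ≤ 1 :=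
  (sum_le_sum_of_subset_of_nonneg (subset_univ _) fun S _ _ => outcomeDist_nonneg hy S).trans
    (sum_outcomeDist y).le

lemma hasSum_quitProb {y : Fin N → ℕ → ℝ} (hy : IsProfile y)
    {A : Finset (Fin N)} (hA : A.Nonempty) :
    HasSum (fun t => survivalProb y t * ∏ i ∈ A, y i t) (quitProb y A) := by
  have hne : ∀ S ∈ univ.filter (A ⊆ ·), S ≠ ∅ := fun S hS =>
    (hA.mono (mem_filter.1 hS).2).ne_empty
  have h := hasSum_sum fun S hS => (summable_termProb hy (hne S hS)).hasSum
  simp only [termProb_eq, ← mul_sum, sum_bernoulliProd_superset] at h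
  rwa [quitProb, sum_congr rfl fun S hS => by rw [outcomeDist, if_neg (hne S hS)]]

lemma quitProb_singleton_le {y : Fin N → ℕ → ℝ} (hy : IsProfile y)
    {a k : Fin N} {p q : ℝ} (hp : 0 < p) (hya : ∀ t, p ≤ y a t) (hyk : ∀ t, y k t ≤ q) :
    quitProb y {k} ≤ q / p := by
  have hp1 : p ≤ 1 := (hya 0).trans (hy a 0).2
  have hgeom := (hasSum_geometric_of_lt_one (r := 1 - p) (by linarith) (by linarith)).mul_right q
  rw [sub_sub_cancel, ← div_eq_inv_mul] at hgeom
  refine hasSum_le (fun t => ?_) (hasSum_quitProb hy (singleton_nonempty k)) hgeom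
  rw [prod_singleton]
  exact mul_le_mul (survivalProb_le_pow hy hya t) (hyk t) (hy k t).1
    (pow_nonneg (by linarith) t)

lemma quitProb_pair_le {y : Fin N → ℕ → ℝ} (hy : IsProfile y)
    {a i : Fin N} (hai : a ≠ i) {p : ℝ} (hp : 0 ≤ p) (hya : ∀ t, y a t ≤ p) :
    quitProb y {a, i} ≤ p := by
  have hi := (hasSum_quitProb hy (singleton_nonempty i)).mul_left p
  refine (hasSum_le (fun t => ?_) (hasSum_quitProb hy (insert_nonempty a {i})) hi).trans ?_
  · rw [prod_pair hai, prod_singleton]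
    nlinarith [mul_nonneg (survivalProb_nonneg hy t) (hy i t).1, hya t]
  · exact mul_le_of_le_one_right hp (quitProb_le_one hy {i})

lemma sum_outcomeDist_not_subset_le {y : Fin N → ℕ → ℝ} (hy : IsProfile y)
    (k : Fin N) (A : Finset (Fin N)) :
    ∑ S with ¬S ⊆ A, outcomeDist y S ≤
      quitProb y {k} + ∑ S with ¬S ⊆ insert k A, outcomeDist y S := by
  have hcover : univ.filter (¬· ⊆ A) ⊆
      univ.filter ({k} ⊆ ·) ∪ univ.filter (¬· ⊆ insert k A) := by
    intro S hS
    simp only [mem_union, mem_filter, mem_univ, true_and, singleton_subset_iff] at hS ⊢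
    by_contra! h
    exact hS ((subset_insert_iff_of_notMem h.1).1 h.2)
  exact (sum_le_sum_of_subset_of_nonneg hcover fun S _ _ => outcomeDist_nonneg hy S).trans
    (sum_union_le_add (outcomeDist_nonneg hy) _ _)

section Game

variable {r : Finset (Fin N) → Fin N → ℝ}

section Bounds

variable {y : Fin N → ℕ → ℝ}

lemma payoff_le_of_empty_le_of_self_le (hr : ∀ S i, r S i ∈ Set.Icc (-1 : ℝ) 1)
    (hy : IsProfile y) {i : Fin N} {c : ℝ} (hc : -1 ≤ c)
    (hempty : r ∅ i ≤ c) (hself : r {i} i ≤ c) :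
    payoff r y i ≤ c + 2 * ∑ S with ¬S ⊆ {i}, outcomeDist y S := by
  rw [payoff_eq_sum_outcomeDist r hy]
  refine sum_mul_le_add_two_mul_sum _ (outcomeDist_nonneg hy) (sum_outcomeDist y)
    (fun S => (hr S i).2) hc fun S hS => ?_
  have hsub : S ⊆ {i} := by by_contra h; exact hS (mem_filter.2 ⟨mem_univ S, h⟩)
  rcases subset_singleton_iff.1 hsub with rfl | rfl
  exacts [hempty, hself]

lemma payoff_le_of_steady_quitter (hr : ∀ S i, r S i ∈ Set.Icc (-1 : ℝ) 1)
    (hy : IsProfile y) {a i : Fin N} (hai : a ≠ i) {p c : ℝ} (hp : 0 < p)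
    (hya : ∀ t, y a t = p) (hc : -1 ≤ c) (hquit : r {a} i ≤ c) (hself : r {i} i ≤ c) :
    payoff r y i ≤ c + 2 * (p + ∑ S with ¬S ⊆ {a, i}, outcomeDist y S) := by
  have hw := outcomeDist_nonneg hy
  have hstop : ∑ S ∈ {∅} ∪ univ.filter ({a, i} ⊆ ·), outcomeDist y S ≤ p := by
    refine (sum_union_le_add hw _ _).trans ?_
    rw [sum_singleton, outcomeDist_empty_eq_zero hy hp (hya · |>.ge), zero_add]
    exact quitProb_pair_le hy hai hp.le (hya · |>.le)
  have hbad := sum_union_le_add hw ({∅} ∪ univ.filter ({a, i} ⊆ ·)) (univ.filter (¬· ⊆ {a, i}))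
  rw [payoff_eq_sum_outcomeDist r hy]
  refine (sum_mul_le_add_two_mul_sum (({∅} ∪ univ.filter ({a, i} ⊆ ·)) ∪
    univ.filter (¬· ⊆ {a, i})) hw (sum_outcomeDist y) (fun S => (hr S i).2) hc
    fun S hS => ?_).trans (by linarith)
  simp only [mem_union, mem_singleton, mem_filter, mem_univ, true_and, not_or, not_not] at hS
  obtain ⟨⟨hne, hnot⟩, hsub⟩ := hS
  by_cases hiS : i ∈ S
  · have haS : a ∉ S := fun haS => hnot (insert_subset haS (singleton_subset_iff.2 hiS))
    rcases subset_singleton_iff.1 ((subset_insert_iff_of_notMem haS).1 hsub) with rfl | rfl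
    exacts [absurd rfl hne, hself]
  · have hsub' : S ⊆ {a} := fun j hj => by
      rcases mem_insert.1 (hsub hj) with rfl | hji
      exacts [mem_singleton_self j, absurd (mem_singleton.1 hji ▸ hj) hiS]
    rcases subset_singleton_iff.1 hsub' with rfl | rfl
    exacts [absurd rfl hne, hquit]

lemma le_payoff_of_steady_quitter (hr : ∀ S i, r S i ∈ Set.Icc (-1 : ℝ) 1)
    (hy : IsProfile y) {a : Fin N} {p : ℝ} (hp : 0 < p)
    (hya : ∀ t, p ≤ y a t) (i : Fin N) :
    r {a} i - 2 * ∑ S with ¬S ⊆ {a}, outcomeDist y S ≤ payoff r y i := by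
  have hw := outcomeDist_nonneg hy
  have hbad : ∑ S ∈ {∅} ∪ univ.filter (¬· ⊆ {a}), outcomeDist y S ≤
      ∑ S with ¬S ⊆ {a}, outcomeDist y S := by
    refine (sum_union_le_add hw _ _).trans ?_
    rw [sum_singleton, outcomeDist_empty_eq_zero hy hp hya, zero_add]
  have hgood : ∀ S ∉ {∅} ∪ univ.filter (¬· ⊆ {a}), -r S i ≤ -r {a} i := by
    intro S hS
    have hsub : S ⊆ {a} := by
      by_contra h; exact hS (mem_union_right _ (mem_filter.2 ⟨mem_univ S, h⟩))
    rcases subset_singleton_iff.1 hsub with rfl | rfl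
    exacts [absurd (mem_union_left _ (mem_singleton_self ∅)) hS, le_rfl]
  have h := sum_mul_le_add_two_mul_sum _ hw (sum_outcomeDist y)
    (fun S => by linarith [(hr S i).1]) (by linarith [(hr {a} i).2]) hgood
  rw [payoff_eq_sum_outcomeDist r hy]
  simp only [mul_neg, sum_neg_distrib] at h
  linarith

end Bounds

lemma IsProfile.update {x : Fin N → ℕ → ℝ} (hx : IsProfile x) (i : Fin N) {x' : ℕ → ℝ}
    (hx' : ∀ t, x' t ∈ Set.Icc (0 : ℝ) 1) : IsProfile (Function.update x i x') := by
  intro j t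
  by_cases hji : j = i
  · subst hji; simpa using hx' t
  · simpa [Function.update_of_ne hji] using hx j t

lemma sum_outcomeDist_update_not_subset_eq_zero {ρ : Fin N → ℝ} {i : Fin N}
    {A : Finset (Fin N)} (hi : i ∈ A) (hρ : ∀ j ∉ A, ρ j = 0) (x' : ℕ → ℝ) :
    ∑ S with ¬S ⊆ A, outcomeDist (Function.update (fun j _ => ρ j) i x') S = 0 :=
  sum_outcomeDist_not_subset_eq_zero fun j hj t => by
    rw [Function.update_of_ne (ne_of_mem_of_not_mem hi hj).symm, hρ j hj]

lemma payoff_zero (r : Finset (Fin N) → Fin N → ℝ) (i : Fin N) :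
    payoff r (fun _ _ => 0) i = r ∅ i := by
  simp [payoff, termProb]

lemma isEpsEquilibrium_zero (hr : ∀ S i, r S i ∈ Set.Icc (-1 : ℝ) 1)
    (hdiag : ∀ i : Fin N, r {i} i = 0) (hempty : ∀ i, 0 ≤ r ∅ i) {ε : ℝ} (hε : 0 ≤ ε) :
    IsEpsEquilibrium r (fun _ _ => 0) ε := by
  have hx : IsProfile (fun (_ : Fin N) (_ : ℕ) => (0 : ℝ)) := fun _ _ => ⟨le_rfl, zero_le_one⟩
  refine ⟨hx, fun i x' hx' => ?_⟩
  have hidle := sum_outcomeDist_update_not_subset_eq_zero (ρ := fun _ => 0) (mem_singleton_self i)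
    (fun _ _ => rfl) x'
  have hdev := payoff_le_of_empty_le_of_self_le hr (hx.update i hx') (c := r ∅ i)
    (by linarith [hempty i]) le_rfl (by rw [hdiag i]; exact hempty i)
  rw [payoff_zero]
  linarith

lemma isEpsEquilibrium_solo (hr : ∀ S i, r S i ∈ Set.Icc (-1 : ℝ) 1)
    (hdiag : ∀ i : Fin N, r {i} i = 0) {m : Fin N} (hm : ∀ j, 0 ≤ r {m} j) (hempty : r ∅ m ≤ 0)
    {p ε : ℝ} (hp : 0 < p) (hp1 : p ≤ 1) (hpε : 2 * p ≤ ε) :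
    IsEpsEquilibrium r (fun j _ => if j = m then p else 0) ε := by
  set x : Fin N → ℕ → ℝ := fun j _ => if j = m then p else 0
  have hx : IsProfile x := fun j t => by
    by_cases hj : j = m <;> simp [x, hj, hp.le, hp1]
  have hxm : ∀ t, x m t = p := by simp [x]
  have hxpay : ∀ j, r {m} j ≤ payoff r x j := fun j => by
    have hidle : ∑ S with ¬S ⊆ {m}, outcomeDist x S = 0 :=
      sum_outcomeDist_not_subset_eq_zero fun j hj t => by simp_all [x]
    linarith [le_payoff_of_steady_quitter hr hx hp (hxm · |>.ge) j]
  refine ⟨hx, fun i x' hx' => ?_⟩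
  set y := Function.update x i x'
  have hy := hx.update i hx'
  by_cases him : i = m
  · subst him
    have hidle : ∑ S with ¬S ⊆ {i}, outcomeDist y S = 0 :=
      sum_outcomeDist_update_not_subset_eq_zero (mem_singleton_self i) (fun j hj => by simp_all) x'
    have hdev := payoff_le_of_empty_le_of_self_le hr hy (c := 0) (by norm_num) hempty (hdiag i).le
    linarith [hxpay i, hdiag i]
  · have hidle : ∑ S with ¬S ⊆ {m, i}, outcomeDist y S = 0 :=
      sum_outcomeDist_update_not_subset_eq_zero (by simp) (fun j hj => by simp_all) x'
    have hdev := payoff_le_of_steady_quitter hr hy (Ne.symm him) hp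
      (fun t => by simp [Function.update_of_ne (Ne.symm him), hxm]) (by linarith [hm i])
      le_rfl (by rw [hdiag i]; exact hm i)
    linarith [hxpay i]

lemma isEpsEquilibrium_pair (hr : ∀ S i, r S i ∈ Set.Icc (-1 : ℝ) 1)
    (hdiag : ∀ i : Fin N, r {i} i = 0) {m k : Fin N} (hkm : k ≠ m) (hm : ∀ j, 0 ≤ r {m} j)
    (hk : r {k} m ≤ 0) {p ε : ℝ} (hp : 0 < p) (hp1 : p ≤ 1) (hpε : 6 * p ≤ ε) :
    IsEpsEquilibrium r (fun j _ => if j = m then p else if j = k then p ^ 2 else 0) ε := by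
  set x : Fin N → ℕ → ℝ := fun j _ => if j = m then p else if j = k then p ^ 2 else 0
  have hp2 : p ^ 2 ≤ 1 := pow_le_one₀ hp.le hp1
  have hx : IsProfile x := fun j t => by
    simp only [x]
    split_ifs <;> constructor <;> nlinarith
  have hxm : ∀ t, x m t = p := by simp [x]
  have hxk : ∀ t, x k t = p ^ 2 := by simp [x, hkm]
  have hpp : p ^ 2 / p = p := by field_simp
  have hxpay : ∀ j, r {m} j - 2 * p ≤ payoff r x j := fun j => by
    have hidle : ∑ S with ¬S ⊆ {k, m}, outcomeDist x S = 0 :=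
      sum_outcomeDist_not_subset_eq_zero fun j hj t => by simp_all [x]
    have hnoise := quitProb_singleton_le hx hp (hxm · |>.ge) (hxk · |>.le)
    linarith [le_payoff_of_steady_quitter hr hx hp (hxm · |>.ge) j,
      sum_outcomeDist_not_subset_le hx k {m}]
  refine ⟨hx, fun i x' hx' => ?_⟩
  set y := Function.update x i x'
  have hy := hx.update i hx'
  by_cases him : i = m
  · subst him
    have hidle : ∑ S with ¬S ⊆ {k, i}, outcomeDist y S = 0 :=
      sum_outcomeDist_update_not_subset_eq_zero (by simp) (fun j hj => by simp_all) x'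
    have hdev := payoff_le_of_steady_quitter hr hy hkm (pow_pos hp 2)
      (fun t => by simp [Function.update_of_ne hkm, hxk]) (by norm_num) hk (hdiag i).le
    nlinarith [hxpay i, hdiag i]
  have hym : ∀ t, y m t = p := fun t => by simp [y, Function.update_of_ne (Ne.symm him), hxm]
  have hnoise : ∑ S with ¬S ⊆ {m, i}, outcomeDist y S ≤ p := by
    by_cases hik : i = k
    · subst hik
      rw [sum_outcomeDist_update_not_subset_eq_zero (by simp) (fun j hj => by simp_all) x']
      exact hp.le
    · have hidle : ∑ S with ¬S ⊆ insert k {m, i}, outcomeDist y S = 0 :=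
        sum_outcomeDist_update_not_subset_eq_zero (by simp) (fun j hj => by simp_all) x'
      have hk := quitProb_singleton_le hy hp (hym · |>.ge)
        (fun t => (show y k t = p ^ 2 by simp [y, Function.update_of_ne (Ne.symm hik), hxk]).le)
      linarith [sum_outcomeDist_not_subset_le hy k {m, i}]
  have hdev := payoff_le_of_steady_quitter hr hy (Ne.symm him) hp hym (by linarith [hm i])
    le_rfl (by rw [hdiag i]; exact hm i)
  linarith [hxpay i]

lemma normalLevel_antitone (r : Finset (Fin N) → Fin N → ℝ) : Antitone (normalLevel r) :=
  antitone_nat_of_succ_le fun _ _ hi => hi.1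

lemma exists_normalLevel_eq_empty (habn : normalPlayers r = ∅) : ∃ l, normalLevel r l = ∅ := by
  obtain ⟨n, hn⟩ := WellFoundedLT.antitone_chain_condition (normalLevel_antitone r)
  refine ⟨n, Set.eq_empty_of_subset_empty fun i hi => habn ▸ Set.mem_iInter.2 fun l => ?_⟩
  rcases le_total l n with hln | hnl
  exacts [normalLevel_antitone r hln hi, hn l hnl ▸ hi]

lemma exists_last_nonempty_normalLevel (hN : 1 ≤ N) (habn : normalPlayers r = ∅) :
    ∃ M, (normalLevel r M).Nonempty ∧ normalLevel r (M + 1) = ∅ := by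
  obtain ⟨l, hl⟩ := exists_normalLevel_eq_empty habn
  induction l with
  | zero => exact absurd hl (Set.Nonempty.ne_empty ⟨⟨0, hN⟩, Set.mem_univ _⟩)
  | succ l ih =>
    by_cases hl' : normalLevel r l = ∅
    exacts [ih hl', ⟨l, Set.nonempty_iff_ne_empty.2 hl', hl⟩]

lemma pos_of_mem_last_normalLevel {M : ℕ} (hM : normalLevel r (M + 1) = ∅) {m j : Fin N}
    (hm : m ∈ normalLevel r M) (hjm : j ≠ m) : 0 < r {m} j := by
  obtain ⟨l, hjl, hjl'⟩ := Nat.exists_not_and_succ_of_not_zero_of_exists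
    (p := (j ∉ normalLevel r ·)) (not_not.2 (Set.mem_univ j)) ⟨M + 1, hM ▸ Set.notMem_empty j⟩
  have hlM : l ≤ M := Nat.lt_succ_iff.1 <| lt_of_not_ge fun h =>
    Set.notMem_empty j (hM ▸ normalLevel_antitone r h (not_not.1 hjl))
  by_contra! hneg
  exact hjl' ⟨not_not.1 hjl, m, normalLevel_antitone r hlM hm, hjm.symm, hneg⟩

end Game

end QuittingGame

open QuittingGame

/-- **If all players are abnormal (the set of normal players is empty), then the quitting
game admits a stationary `ε`-equilibrium, for every `ε > 0`.** -/
theorem quitting_game_stationary_equilibrium_of_all_abnormal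
    (N : ℕ) (hN : 1 ≤ N)
    (r : Finset (Fin N) → Fin N → ℝ)
    (hr : ∀ S i, r S i ∈ Set.Icc (-1 : ℝ) 1)
    (hdiag : ∀ i : Fin N, r {i} i = 0)
    (habn : normalPlayers r = ∅)
    (ε : ℝ) (hε : 0 < ε) :
    ∃ x : Fin N → ℕ → ℝ, (∀ i t, x i t = x i 0) ∧ IsEpsEquilibrium r x ε := by
  by_cases hempty : ∀ i, 0 ≤ r ∅ i
  · exact ⟨_, fun _ _ => rfl, isEpsEquilibrium_zero hr hdiag hempty hε.le⟩
  obtain ⟨i₀, hi₀⟩ := not_forall.1 hempty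
  obtain ⟨M, ⟨m, hm⟩, hM⟩ := exists_last_nonempty_normalLevel hN habn
  have hdom : ∀ m ∈ normalLevel r M, ∀ j, 0 ≤ r {m} j := fun m hm j => by
    rcases eq_or_ne j m with rfl | hjm
    exacts [(hdiag j).ge, (pos_of_mem_last_normalLevel hM hm hjm).le]
  have hmin : 0 < min ε 1 := lt_min hε one_pos
  cases M with
  | zero =>
    exact ⟨_, fun _ _ => rfl, isEpsEquilibrium_solo hr hdiag (hdom i₀ (Set.mem_univ i₀))
      (not_le.1 hi₀).le (p := min ε 1 / 2) (by linarith) (by linarith [min_le_right ε 1])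
      (by linarith [min_le_left ε 1])⟩
  | succ M =>
    obtain ⟨-, k, -, hkm, hk⟩ := normalLevel_antitone r (Nat.le_add_left 1 M) hm
    exact ⟨_, fun _ _ => rfl, isEpsEquilibrium_pair hr hdiag hkm (hdom m hm) hk
      (p := min ε 1 / 6) (by linarith) (by linarith [min_le_right ε 1])
      (by linarith [min_le_left ε 1])⟩

end
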